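/- Let A be an n×n Hermitian matrix (n ≥ 2) with non-scalar entries so that B = A − (tr A / n)·I ≠ 0. Then λ_min(A) ≤ tr A/n − ((n²−3n+3)/(n³(n−1)³))^{1/4} · tr(B²)/(tr B⁴)^{1/4} and λ_max(A) ≥ tr A/n + ((n²−3n+3)/(n³(n−1)³))^{1/4} · tr(B²)/(tr B⁴)^{1/4}. -/

import Mathlib

/-!
Diagonalising `A`, put `dᵢ = λᵢ - tr A / n`, so that `∑ dᵢ = 0`, `tr B² = ∑ dᵢ²` and
`tr B⁴ = ∑ dᵢ⁴`. Let `a = min d` and `b ≥ max d`. Summing `(b - dᵢ)(dᵢ - a) ≥ 0` gives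
`∑ dᵢ² ≤ n b (-a)`. The other `n - 1` values sum to `-a`, so by the power mean inequality
`∑ dᵢ⁴ ≥ (1 + 1/(n-1)³) a⁴ = n (n² - 3n + 3) a⁴ / (n-1)³`. Eliminating `a` gives
`(n² - 3n + 3) / (n³ (n-1)³) · (∑ dᵢ²)⁴ ≤ b⁴ ∑ dᵢ⁴`, which is the bound for `λ_max`.
Applying it to `-d` gives the bound for `λ_min`.
-/

open Finset

theorem pow_four_sum_le_card_pow_three_mul_sum_pow_four {ι α : Type*} [CommSemiring α]
    [LinearOrder α] [IsStrictOrderedRing α] [ExistsAddOfLE α] (s : Finset ι) (f : ι → α) :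
    (∑ i ∈ s, f i) ^ 4 ≤ (#s : α) ^ 3 * ∑ i ∈ s, f i ^ 4 :=
  calc (∑ i ∈ s, f i) ^ 4 = ((∑ i ∈ s, f i) ^ 2) ^ 2 := by ring
    _ ≤ (#s * ∑ i ∈ s, f i ^ 2) ^ 2 :=
        pow_le_pow_left₀ (sq_nonneg _) sq_sum_le_card_mul_sum_sq 2
    _ = #s ^ 2 * (∑ i ∈ s, f i ^ 2) ^ 2 := by ring
    _ ≤ #s ^ 2 * (#s * ∑ i ∈ s, (f i ^ 2) ^ 2) := by gcongr; exact sq_sum_le_card_mul_sum_sq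
    _ = #s ^ 3 * ∑ i ∈ s, f i ^ 4 := by simp only [← pow_mul]; ring

theorem rpow_quarter_mul_div_rpow_quarter_le {C x S m : ℝ} (hC : 0 ≤ C) (hS : 0 ≤ S)
    (hm : 0 ≤ m) (h : C * x ^ 4 ≤ m ^ 4 * S) :
    C ^ (1 / 4 : ℝ) * x / S ^ (1 / 4 : ℝ) ≤ m := by
  rcases hS.eq_or_lt with rfl | hS
  · simpa [Real.zero_rpow] using hm
  have hroot {y : ℝ} (hy : 0 ≤ y) : (y ^ (1 / 4 : ℝ)) ^ 4 = y := by
    rw [← Real.rpow_natCast, ← Real.rpow_mul hy]; norm_num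
  rw [div_le_iff₀ (by positivity)]
  refine le_of_pow_le_pow_left₀ four_ne_zero (by positivity) ?_
  rw [mul_pow, mul_pow, hroot hC, hroot hS.le]
  exact h

section SumEqZero

variable {ι : Type*} [Fintype ι] {d : ι → ℝ}

theorem sum_sq_le_card_mul_of_sum_eq_zero {a b : ℝ} (hsum : ∑ i, d i = 0)
    (ha : ∀ i, a ≤ d i) (hb : ∀ i, d i ≤ b) :
    ∑ i, d i ^ 2 ≤ Fintype.card ι * b * -a :=
  calc ∑ i, d i ^ 2 ≤ ∑ i, (b * -a + (a + b) * d i) :=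
        sum_le_sum fun i _ => by nlinarith [ha i, hb i]
    _ = Fintype.card ι * b * -a := by
        simp only [sum_add_distrib, ← mul_sum, hsum, sum_const, card_univ, nsmul_eq_mul]; ring

theorem pow_four_le_of_sum_eq_zero (hsum : ∑ i, d i = 0) (j : ι) :
    (((Fintype.card ι : ℝ) - 1) ^ 3 + 1) * d j ^ 4
      ≤ ((Fintype.card ι : ℝ) - 1) ^ 3 * ∑ i, d i ^ 4 := by
  classical
  have hj : j ∈ univ := mem_univ j
  have hrest : ∑ i ∈ univ.erase j, d i = -d j := by
    linarith [sum_erase_add univ d hj]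
  have hcard : (#(univ.erase j) : ℝ) = Fintype.card ι - 1 := by
    rw [card_erase_of_mem hj, card_univ, Nat.cast_pred (Fintype.card_pos_iff.mpr ⟨j⟩)]
  have := pow_four_sum_le_card_pow_three_mul_sum_pow_four (univ.erase j) d
  rw [hrest, hcard, sum_erase_eq_sub hj] at this
  linarith [show (-d j) ^ 4 = d j ^ 4 by ring]

theorem rpow_quarter_mul_sum_sq_div_le_of_sum_eq_zero {n : ℕ} (hcard : Fintype.card ι = n)
    (hn : 2 ≤ n) (hsum : ∑ i, d i = 0) {b : ℝ} (hb : ∀ i, d i ≤ b) :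
    (((n : ℝ) ^ 2 - 3 * n + 3) / ((n : ℝ) ^ 3 * ((n : ℝ) - 1) ^ 3)) ^ (1 / 4 : ℝ)
      * (∑ i, d i ^ 2) / (∑ i, d i ^ 4) ^ (1 / 4 : ℝ) ≤ b := by
  have hn₁ : (0 : ℝ) < n - 1 := by
    have : (2 : ℝ) ≤ n := by exact_mod_cast hn
    linarith
  have hquad : (0 : ℝ) ≤ n ^ 2 - 3 * n + 3 := by nlinarith [sq_nonneg (2 * (n : ℝ) - 3)]
  have hne : (univ : Finset ι).Nonempty :=
    univ_nonempty_iff.mpr <| Fintype.card_pos_iff.mp (by omega)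
  obtain ⟨j, -, hj⟩ := exists_min_image univ d hne
  obtain ⟨k, -, hk⟩ := exists_le_of_sum_le hne (f := 0) (g := d) (by simp [hsum])
  have hS₂ : 0 ≤ ∑ i, d i ^ 2 := sum_nonneg fun i _ => by positivity
  have hS₄ : 0 ≤ ∑ i, d i ^ 4 := sum_nonneg fun i _ => by positivity
  have h₂ : ∑ i, d i ^ 2 ≤ n * b * -d j := by
    simpa [hcard] using sum_sq_le_card_mul_of_sum_eq_zero hsum (fun i => hj i (mem_univ i)) hb
  have h₄ : ((n - 1) ^ 3 + 1) * d j ^ 4 ≤ ((n : ℝ) - 1) ^ 3 * ∑ i, d i ^ 4 := by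
    simpa [hcard] using pow_four_le_of_sum_eq_zero hsum j
  refine rpow_quarter_mul_div_rpow_quarter_le (by positivity) hS₄ (hk.trans (hb k)) ?_
  rw [div_mul_eq_mul_div, div_le_iff₀ (by positivity)]
  calc (n ^ 2 - 3 * n + 3) * (∑ i, d i ^ 2) ^ 4
      ≤ (n ^ 2 - 3 * n + 3) * (n * b * -d j) ^ 4 := by gcongr
    _ = n ^ 3 * b ^ 4 * (((n - 1) ^ 3 + 1) * d j ^ 4) := by ring
    _ ≤ n ^ 3 * b ^ 4 * ((n - 1) ^ 3 * ∑ i, d i ^ 4) := by gcongr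
    _ = b ^ 4 * (∑ i, d i ^ 4) * (n ^ 3 * (n - 1) ^ 3) := by ring

end SumEqZero

theorem Matrix.IsHermitian.trace_pow_sub_smul_one {𝕜 ι : Type*} [RCLike 𝕜] [Fintype ι]
    [DecidableEq ι] {A : Matrix ι ι 𝕜} (hA : A.IsHermitian) (t : ℝ) (k : ℕ) :
    ((A - t • 1) ^ k).trace = ∑ i, (((hA.eigenvalues i - t) ^ k : ℝ) : 𝕜) := by
  set U := hA.eigenvectorUnitary
  have hconj : A - t • 1
      = Unitary.conjStarAlgAut 𝕜 _ U (diagonal fun i => ((hA.eigenvalues i - t : ℝ) : 𝕜)) := by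
    conv_lhs => rw [hA.spectral_theorem, ← map_one (Unitary.conjStarAlgAut 𝕜 _ U),
      RCLike.real_smul_eq_coe_smul (K := 𝕜)]
    rw [← map_smul, ← map_sub, smul_one_eq_diagonal, diagonal_sub]
    simp [U, RCLike.algebraMap_eq_ofReal]
  rw [hconj, ← map_pow, Unitary.conjStarAlgAut_apply, trace_mul_cycle, Unitary.coe_star_mul_self,
    one_mul, diagonal_pow, trace_diagonal]
  simp

theorem stmt_17 (n : ℕ) (hn : 2 ≤ n) (A : Matrix (Fin n) (Fin n) ℂ)
    (hA : A.IsHermitian)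
    (B : Matrix (Fin n) (Fin n) ℂ)
    (hB : B = A - (A.trace / n) • 1) :
    (Finset.univ.inf' (Finset.univ_nonempty_iff.mpr (Fin.pos_iff_nonempty.mp (by omega)))
        hA.eigenvalues ≤
      A.trace.re / n - (((n : ℝ) ^ 2 - 3 * n + 3) / ((n : ℝ) ^ 3 * ((n : ℝ) - 1) ^ 3)) ^ ((1 : ℝ) / 4)
        * (B ^ 2).trace.re / ((B ^ 4).trace.re ^ ((1 : ℝ) / 4))) ∧
    (Finset.univ.sup' (Finset.univ_nonempty_iff.mpr (Fin.pos_iff_nonempty.mp (by omega)))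
        hA.eigenvalues ≥
      A.trace.re / n + (((n : ℝ) ^ 2 - 3 * n + 3) / ((n : ℝ) ^ 3 * ((n : ℝ) - 1) ^ 3)) ^ ((1 : ℝ) / 4)
        * (B ^ 2).trace.re / ((B ^ 4).trace.re ^ ((1 : ℝ) / 4))) := by
  set t := A.trace.re / n
  have hne : (univ : Finset (Fin n)).Nonempty := univ_nonempty_iff.mpr ⟨⟨0, by omega⟩⟩
  have htrace : A.trace = ((∑ i, hA.eigenvalues i : ℝ) : ℂ) := by
    simpa using hA.trace_eq_sum_eigenvalues
  have hBt : B = A - t • 1 := by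
    have : A.trace / n = (t : ℂ) := by simp [t, htrace]
    rw [hB, this, Complex.coe_smul]
  have hpow (k : ℕ) : (B ^ k).trace.re = ∑ i, (hA.eigenvalues i - t) ^ k := by
    rw [hBt, hA.trace_pow_sub_smul_one, ← RCLike.ofReal_sum (K := ℂ)]
    exact Complex.ofReal_re _
  have hsum : ∑ i, (hA.eigenvalues i - t) = 0 := by
    simp only [sum_sub_distrib, sum_const, card_univ, Fintype.card_fin, nsmul_eq_mul, t]
    rw [mul_div_cancel₀ _ (by positivity), htrace, Complex.ofReal_re, sub_self]
  rw [hpow 2, hpow 4]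
  constructor
  · have := rpow_quarter_mul_sum_sq_div_le_of_sum_eq_zero (Fintype.card_fin n) hn
      (d := fun i => -(hA.eigenvalues i - t)) (by rw [sum_neg_distrib, hsum, neg_zero])
      (b := t - univ.inf' hne hA.eigenvalues)
      fun i => by linarith [inf'_le hA.eigenvalues (mem_univ i)]
    simp only [neg_sq, Even.neg_pow (by decide : Even 4)] at this
    linarith
  · have := rpow_quarter_mul_sum_sq_div_le_of_sum_eq_zero (Fintype.card_fin n) hn hsum
      (b := univ.sup' hne hA.eigenvalues - t)
      fun i => by linarith [le_sup' hA.eigenvalues (mem_univ i)]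
    linarith
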